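/- If the 0-combination L₀ of two orthogonal latin squares A₀, A₁ of order n contains a K_{3,3} pattern in six blocks with block-coordinates (I,J''),(I',J''),(I,J),(I',J'),(I'',J),(I'',J'), and a switching matrix S satisfies S(I,J'')+S(I',J'')+S(I,J)+S(I',J')+S(I'',J)+S(I'',J') = 1 in GF(2) for every such pattern, then the switched combination L_S is K_{3,3}-free. -/

import Mathlib

/-- A latin square of order `n` as a function: each row and each column is injective. -/
def IsLatin {n : ℕ} (A : Fin n → Fin n → Fin n) : Prop :=
  (∀ r, Function.Injective (A r)) ∧ (∀ c, Function.Injective (fun r => A r c))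

/-- The block coordinate of a row or column index. -/
def blk {n : ℕ} (i : Fin (2 * n)) : Fin n :=
  ⟨i.val / 2, by have := i.isLt; omega⟩

/-- The switched combination of two latin squares `A₀`, `A₁` of order `n` with switching
matrix `S`: letters of `A₀` are embedded as even numbers and letters of `A₁` as odd numbers,
and `L(i,j) = A_ε(⌊i/2⌋,⌊j/2⌋)` where `ε = 1` iff `i + j + S(⌊i/2⌋,⌊j/2⌋) ≡ 0 (mod 2)`. -/
def comb {n : ℕ} (A0 A1 : Fin n → Fin n → Fin n) (S : Fin n → Fin n → ZMod 2)
    (i j : Fin (2 * n)) : ℕ :=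
  if ((i.val : ZMod 2) + (j.val : ZMod 2) + S (blk i) (blk j) = 0)
    then 2 * (A1 (blk i) (blk j)).val + 1
    else 2 * (A0 (blk i) (blk j)).val

/-! The letter in cell `(i, j)` of `L_S` is determined by the blocks of the cell and its parity
`i + j + S(⌊i/2⌋, ⌊j/2⌋)`, which selects the square; two cells carry the same letter iff their
parities agree and the selected square agrees on their blocks. In a `K_{3,3}` pattern of `L_S`,
two rows in one block force (by latinity) two columns in one block; orthogonality then makes the
parities of the other four cells agree, so these two columns also have the same parity and
coincide. Hence the pattern occupies six blocks. Its cells being equal in pairs, the six parities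
sum to zero, i.e. the switching sum over these blocks is even. Offsets inside the same six blocks
reproducing these parities with `S = 0` give a pattern of `L₀`, on which the hypothesis makes the
switching sum odd. -/

open Function

def IsK33Pattern {R C α : Type*} (L : R → C → α) (r1 r2 r3 : R) (c1 c2 c3 : C) : Prop :=
  r1 ≠ r2 ∧ r1 ≠ r3 ∧ r2 ≠ r3 ∧ c1 ≠ c2 ∧ c1 ≠ c3 ∧ c2 ≠ c3 ∧
    L r1 c2 = L r2 c1 ∧ L r2 c3 = L r3 c2 ∧ L r3 c1 = L r1 c3

namespace IsK33Pattern

variable {R C α : Type*} {L : R → C → α} {r1 r2 r3 : R} {c1 c2 c3 : C}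

theorem rotate (h : IsK33Pattern L r1 r2 r3 c1 c2 c3) : IsK33Pattern L r2 r3 r1 c2 c3 c1 := by
  obtain ⟨h12, h13, h23, g12, g13, g23, e1, e2, e3⟩ := h
  exact ⟨h23, h12.symm, h13.symm, g23, g12.symm, g13.symm, e2, e3, e1⟩

theorem swap (h : IsK33Pattern L r1 r2 r3 c1 c2 c3) : IsK33Pattern (swap L) c1 c2 c3 r1 r2 r3 := by
  obtain ⟨h12, h13, h23, g12, g13, g23, e1, e2, e3⟩ := h
  exact ⟨g12, g13, g23, h12, h13, h23, e1.symm, e2.symm, e3.symm⟩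

end IsK33Pattern

section Blocks

variable {n : ℕ}

def ofBlk (I : Fin n) (p : ZMod 2) : Fin (2 * n) :=
  ⟨2 * I.val + p.val, by have := I.isLt; have := ZMod.val_lt p; omega⟩

@[simp]
theorem blk_ofBlk (I : Fin n) (p : ZMod 2) : blk (ofBlk I p) = I :=
  Fin.ext (show (2 * I.val + p.val) / 2 = I.val by have := ZMod.val_lt p; omega)

@[simp]
theorem natCast_ofBlk (I : Fin n) (p : ZMod 2) : ((ofBlk I p).val : ZMod 2) = p := by
  simp [ofBlk, show (2 : ZMod 2) = 0 from rfl]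

theorem ofBlk_ne_ofBlk {I I' : Fin n} (h : I ≠ I') (p p' : ZMod 2) : ofBlk I p ≠ ofBlk I' p' :=
  fun he => h (by simpa using congrArg blk he)

theorem eq_of_blk_eq {i j : Fin (2 * n)} (hb : blk i = blk j) (hp : (i.val : ZMod 2) = j.val) :
    i = j := by
  have h1 : i.val / 2 = j.val / 2 := congrArg Fin.val hb
  have h2 : i.val % 2 = j.val % 2 := (ZMod.natCast_eq_natCast_iff' _ _ 2).mp hp
  exact Fin.ext (by omega)

theorem not_three_in_blk {i j k : Fin (2 * n)} (hij : i ≠ j) (hik : i ≠ k) (hjk : j ≠ k)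
    (h1 : blk i = blk j) (h2 : blk j = blk k) : False := by
  have pigeonhole : ∀ a b c : ZMod 2, a = b ∨ a = c ∨ b = c := by decide
  rcases pigeonhole i.val j.val k.val with h | h | h
  · exact hij (eq_of_blk_eq h1 h)
  · exact hik (eq_of_blk_eq (h1.trans h2) h)
  · exact hjk (eq_of_blk_eq h2 h)

end Blocks

section Combination

variable {n : ℕ} {A0 A1 : Fin n → Fin n → Fin n}

/-- Cell `(i, j)` of `comb A0 A1 S` carries the letter
`combLetter A0 A1 (combParity S i j) (blk i) (blk j)`; the paper's `ε` is `combParity S i j + 1`. -/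
def combParity (S : Fin n → Fin n → ZMod 2) (i j : Fin (2 * n)) : ZMod 2 :=
  (i.val : ZMod 2) + (j.val : ZMod 2) + S (blk i) (blk j)

def combLetter (A0 A1 : Fin n → Fin n → Fin n) (e : ZMod 2) (I J : Fin n) : Fin n :=
  if e = 0 then A1 I J else A0 I J

theorem comb_eq_comb_iff {S S' : Fin n → Fin n → ZMod 2} {r c r' c' : Fin (2 * n)} :
    comb A0 A1 S r c = comb A0 A1 S' r' c' ↔
      combParity S r c = combParity S' r' c' ∧
        combLetter A0 A1 (combParity S r c) (blk r) (blk c) =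
          combLetter A0 A1 (combParity S r c) (blk r') (blk c') := by
  have two_values : ∀ e : ZMod 2, e ≠ 0 → e = 1 := by decide
  unfold comb combLetter
  rw [← combParity, ← combParity]
  split_ifs with h h' h'
  · simp [h, h', Fin.ext_iff]
  · exact ⟨by omega, fun ⟨hp, _⟩ => (h' (hp ▸ h)).elim⟩
  · exact ⟨by omega, fun ⟨hp, _⟩ => (h (hp ▸ h')).elim⟩
  · simp [two_values _ h, two_values _ h', Fin.ext_iff]

theorem comb_swap (S : Fin n → Fin n → ZMod 2) :
    comb (swap A0) (swap A1) (swap S) = swap (comb A0 A1 S) := by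
  funext j i
  simp only [comb, swap, add_comm (j.val : ZMod 2)]

theorem combLetter_injective (h0 : ∀ I, Injective (A0 I)) (h1 : ∀ I, Injective (A1 I))
    (e : ZMod 2) (I : Fin n) : Injective (combLetter A0 A1 e I) := by
  unfold combLetter
  split_ifs
  exacts [h1 I, h0 I]

theorem eq_of_combLetter_eq (horth : Injective (fun p : Fin n × Fin n => (A0 p.1 p.2, A1 p.1 p.2)))
    {e e' : ZMod 2} (he : e ≠ e') {I J I' J' : Fin n}
    (h : combLetter A0 A1 e I J = combLetter A0 A1 e I' J')
    (h' : combLetter A0 A1 e' I J = combLetter A0 A1 e' I' J') : (I, J) = (I', J') := by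
  have two_values : ∀ e e' : ZMod 2, e ≠ e' → e = 0 ∧ e' = 1 ∨ e = 1 ∧ e' = 0 := by decide
  rcases two_values e e' he with ⟨rfl, rfl⟩ | ⟨rfl, rfl⟩
  · exact horth (Prod.ext (by simpa [combLetter] using h') (by simpa [combLetter] using h))
  · exact horth (Prod.ext (by simpa [combLetter] using h) (by simpa [combLetter] using h'))

end Combination

theorem exists_add_eq_of_cycle (x1 x2 x3 : ZMod 2) :
    ∃ p1 p2 p3 q1 q2 q3 : ZMod 2, p1 + q2 = x1 ∧ p2 + q1 = x1 ∧ p2 + q3 = x2 ∧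
      p3 + q2 = x2 ∧ p3 + q1 = x3 ∧ p1 + q3 = x3 :=
  ⟨0, x2 + x3, x1 + x2, x1 + x2 + x3, x1, x3, by revert x1 x2 x3; decide⟩

section Pattern

variable {n : ℕ} {A0 A1 : Fin n → Fin n → Fin n} {S : Fin n → Fin n → ZMod 2}

theorem comb_zero_ofBlk {r c : Fin (2 * n)} {p q : ZMod 2} (h : combParity S r c = p + q) :
    comb A0 A1 (fun _ _ => 0) (ofBlk (blk r) p) (ofBlk (blk c) q) = comb A0 A1 S r c :=
  comb_eq_comb_iff.2 ⟨by simpa [combParity] using h.symm, by simp⟩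

namespace IsK33Pattern

variable {r1 r2 r3 c1 c2 c3 : Fin (2 * n)}

theorem blk_ne_of_comb (h0 : ∀ I, Injective (A0 I)) (h1 : ∀ I, Injective (A1 I))
    (horth : Injective (fun p : Fin n × Fin n => (A0 p.1 p.2, A1 p.1 p.2)))
    (hp : IsK33Pattern (comb A0 A1 S) r1 r2 r3 c1 c2 c3) : blk r1 ≠ blk r2 := by
  obtain ⟨h12, h13, h23, g12, -, -, e1, e2, e3⟩ := hp
  intro hI
  rw [comb_eq_comb_iff] at e1 e2 e3
  have hI3 : blk r2 ≠ blk r3 := fun h => not_three_in_blk h12 h13 h23 hI h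
  have hJ : blk c2 = blk c1 := combLetter_injective h0 h1 _ _ (hI ▸ e1.2)
  -- Otherwise blocks `(I, J₃)` and `(I₃, J)` carry the same letters in both squares.
  have hx : combParity S r2 c3 = combParity S r3 c1 := by
    by_contra hx
    have l2 := e2.2
    have l3 := e3.2.symm
    rw [hJ] at l2
    rw [hI] at l3
    exact hI3 (congrArg Prod.fst (eq_of_combLetter_eq horth hx l2 l3))
  have hc : (c2.val : ZMod 2) = c1.val := by
    have h := e2.1.symm.trans hx
    simp only [combParity, hJ] at h
    simpa using h
  exact g12 (eq_of_blk_eq hJ.symm hc.symm)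

theorem blk_rows_ne (h0 : ∀ I, Injective (A0 I)) (h1 : ∀ I, Injective (A1 I))
    (horth : Injective (fun p : Fin n × Fin n => (A0 p.1 p.2, A1 p.1 p.2)))
    (hp : IsK33Pattern (comb A0 A1 S) r1 r2 r3 c1 c2 c3) :
    blk r1 ≠ blk r2 ∧ blk r1 ≠ blk r3 ∧ blk r2 ≠ blk r3 :=
  ⟨hp.blk_ne_of_comb h0 h1 horth, (hp.rotate.rotate.blk_ne_of_comb h0 h1 horth).symm,
    hp.rotate.blk_ne_of_comb h0 h1 horth⟩

theorem blk_cols_ne (h0 : ∀ J, Injective (fun I => A0 I J)) (h1 : ∀ J, Injective (fun I => A1 I J))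
    (horth : Injective (fun p : Fin n × Fin n => (A0 p.1 p.2, A1 p.1 p.2)))
    (hp : IsK33Pattern (comb A0 A1 S) r1 r2 r3 c1 c2 c3) :
    blk c1 ≠ blk c2 ∧ blk c1 ≠ blk c3 ∧ blk c2 ≠ blk c3 := by
  have hp' := hp.swap
  rw [← comb_swap] at hp'
  exact hp'.blk_rows_ne h0 h1 (horth.comp Prod.swap_injective)

theorem switch_sum_eq_zero (hp : IsK33Pattern (comb A0 A1 S) r1 r2 r3 c1 c2 c3) :
    S (blk r1) (blk c2) + S (blk r2) (blk c3) + S (blk r3) (blk c1) +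
      S (blk r2) (blk c1) + S (blk r3) (blk c2) + S (blk r1) (blk c3) = 0 := by
  obtain ⟨-, -, -, -, -, -, e1, e2, e3⟩ := hp
  have e1 := (comb_eq_comb_iff.1 e1).1
  have e2 := (comb_eq_comb_iff.1 e2).1
  have e3 := (comb_eq_comb_iff.1 e3).1
  unfold combParity at e1 e2 e3
  have two_eq_zero : (2 : ZMod 2) = 0 := rfl
  linear_combination e1 + e2 + e3 +
    (S (blk r2) (blk c1) + S (blk r3) (blk c2) + S (blk r1) (blk c3)) * two_eq_zero

theorem exists_comb_zero (hp : IsK33Pattern (comb A0 A1 S) r1 r2 r3 c1 c2 c3)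
    (hr : blk r1 ≠ blk r2 ∧ blk r1 ≠ blk r3 ∧ blk r2 ≠ blk r3)
    (hc : blk c1 ≠ blk c2 ∧ blk c1 ≠ blk c3 ∧ blk c2 ≠ blk c3) :
    ∃ p1 p2 p3 q1 q2 q3 : ZMod 2, IsK33Pattern (comb A0 A1 (fun _ _ => 0))
      (ofBlk (blk r1) p1) (ofBlk (blk r2) p2) (ofBlk (blk r3) p3)
      (ofBlk (blk c1) q1) (ofBlk (blk c2) q2) (ofBlk (blk c3) q3) := by
  obtain ⟨-, -, -, -, -, -, e1, e2, e3⟩ := hp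
  obtain ⟨p1, p2, p3, q1, q2, q3, h12, h21, h23, h32, h31, h13⟩ :=
    exists_add_eq_of_cycle (combParity S r1 c2) (combParity S r2 c3) (combParity S r3 c1)
  rw [(comb_eq_comb_iff.1 e1).1] at h21
  rw [(comb_eq_comb_iff.1 e2).1] at h32
  rw [(comb_eq_comb_iff.1 e3).1] at h13
  exact ⟨p1, p2, p3, q1, q2, q3, ofBlk_ne_ofBlk hr.1 _ _, ofBlk_ne_ofBlk hr.2.1 _ _,
    ofBlk_ne_ofBlk hr.2.2 _ _, ofBlk_ne_ofBlk hc.1 _ _, ofBlk_ne_ofBlk hc.2.1 _ _,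
    ofBlk_ne_ofBlk hc.2.2 _ _,
    (comb_zero_ofBlk h12.symm).trans (e1.trans (comb_zero_ofBlk h21.symm).symm),
    (comb_zero_ofBlk h23.symm).trans (e2.trans (comb_zero_ofBlk h32.symm).symm),
    (comb_zero_ofBlk h31.symm).trans (e3.trans (comb_zero_ofBlk h13.symm).symm)⟩

end IsK33Pattern

end Pattern

/-- If for every `K_{3,3}` pattern of the 0-combination of two orthogonal latin squares the
switching matrix `S` sums to `1` over the six corresponding block positions, then the
switched combination `L_S` is `K_{3,3}`-free. -/
theorem stmt12 {n : ℕ} (A0 A1 : Fin n → Fin n → Fin n)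
    (hA0 : IsLatin A0) (hA1 : IsLatin A1)
    (horth : Function.Injective (fun p : Fin n × Fin n => (A0 p.1 p.2, A1 p.1 p.2)))
    (S : Fin n → Fin n → ZMod 2)
    (hS : ∀ r1 r2 r3 c1 c2 c3 : Fin (2 * n),
      r1 ≠ r2 → r1 ≠ r3 → r2 ≠ r3 → c1 ≠ c2 → c1 ≠ c3 → c2 ≠ c3 →
      comb A0 A1 (fun _ _ => 0) r1 c2 = comb A0 A1 (fun _ _ => 0) r2 c1 →
      comb A0 A1 (fun _ _ => 0) r2 c3 = comb A0 A1 (fun _ _ => 0) r3 c2 →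
      comb A0 A1 (fun _ _ => 0) r3 c1 = comb A0 A1 (fun _ _ => 0) r1 c3 →
      S (blk r1) (blk c2) + S (blk r2) (blk c3) + S (blk r3) (blk c1) +
        S (blk r2) (blk c1) + S (blk r3) (blk c2) + S (blk r1) (blk c3) = 1) :
    ¬ ∃ r1 r2 r3 c1 c2 c3 : Fin (2 * n),
      r1 ≠ r2 ∧ r1 ≠ r3 ∧ r2 ≠ r3 ∧ c1 ≠ c2 ∧ c1 ≠ c3 ∧ c2 ≠ c3 ∧
      comb A0 A1 S r1 c2 = comb A0 A1 S r2 c1 ∧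
      comb A0 A1 S r2 c3 = comb A0 A1 S r3 c2 ∧
      comb A0 A1 S r3 c1 = comb A0 A1 S r1 c3 := by
  rintro ⟨r1, r2, r3, c1, c2, c3, hpat⟩
  replace hpat : IsK33Pattern (comb A0 A1 S) r1 r2 r3 c1 c2 c3 := hpat
  obtain ⟨p1, p2, p3, q1, q2, q3, h12, h13, h23, g12, g13, g23, e1, e2, e3⟩ :=
    hpat.exists_comb_zero (hpat.blk_rows_ne hA0.1 hA1.1 horth) (hpat.blk_cols_ne hA0.2 hA1.2 horth)
  have hsum := hS _ _ _ _ _ _ h12 h13 h23 g12 g13 g23 e1 e2 e3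
  simp only [blk_ofBlk] at hsum
  exact zero_ne_one (hpat.switch_sum_eq_zero.symm.trans hsum)
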